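/- Let X be a Tychonoff space and let P be either pseudocompactness, or a closed hereditary Mrówka topological property that is preserved under finite closed sums of subspaces. For a one-point Tychonoff extension Y of X, the following are equivalent: (1) Y has P; (2) X is locally-P and βX\λ_P X ⊆ Θ_X(Y). Consequently, Θ_X maps {Y ∈ E(X) : Y has P} onto the set of all nonempty compact subsets C of βX\X with βX\λ_P X ⊆ C. -/

import Mathlib

open Set Topology Filter

universe u

/-- A one-point Tychonoff extension of `X`: a Tychonoff space containing (a homeomorphic copy
of) `X` as a dense subspace whose complement is a single point `pt`. -/
structure OnePointExt (X : Type u) [TopologicalSpace X] : Type (u + 1) where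
  carrier : Type u
  top : TopologicalSpace carrier
  t35 : @T35Space carrier top
  ι : X → carrier
  emb : @Topology.IsEmbedding X carrier _ top ι
  pt : carrier
  range_eq : Set.range ι = {pt}ᶜ
  dense : @DenseRange carrier top X ι

attribute [instance] OnePointExt.top OnePointExt.t35

variable {X : Type u} [TopologicalSpace X]

/-- The partial order on one-point extensions: `Y₁ ≤ Y₂` iff there is a continuous map from
`Y₂` into `Y₁` fixing `X` pointwise. -/
def OnePointExt.le (Y1 Y2 : OnePointExt X) : Prop :=
  ∃ f : Y2.carrier → Y1.carrier, Continuous f ∧ ∀ x, f (Y2.ι x) = Y1.ι x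

/-- Equivalence of extensions: a homeomorphism fixing `X` pointwise. -/
def OnePointExt.equiv (Y1 Y2 : OnePointExt X) : Prop :=
  ∃ h : Y1.carrier ≃ₜ Y2.carrier, ∀ x, h (Y1.ι x) = Y2.ι x

/-- `τ_Y : βX → βY`, the unique continuous extension of `id_X`. -/
noncomputable def OnePointExt.tau (Y : OnePointExt X) : StoneCech X → StoneCech Y.carrier :=
  stoneCechExtend (continuous_stoneCechUnit.comp Y.emb.continuous)

/-- `Θ_X(Y) = τ_Y⁻¹(Y \ X)`, a subset of `βX`. -/
noncomputable def OnePointExt.theta (Y : OnePointExt X) : Set (StoneCech X) :=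
  Y.tau ⁻¹' {stoneCechUnit Y.pt}

/-- A zero-set: `f⁻¹(0)` for a continuous `f : Z → [0,1]`. -/
def IsZeroSet {Z : Type u} [TopologicalSpace Z] (A : Set Z) : Prop :=
  ∃ f : Z → unitInterval, Continuous f ∧ A = f ⁻¹' {0}

/-- A cozero-set: a complement of a zero-set. -/
def IsCozeroSet {Z : Type u} [TopologicalSpace Z] (A : Set Z) : Prop :=
  ∃ f : Z → unitInterval, Continuous f ∧ A = (f ⁻¹' {0})ᶜ

/-- `λ_P X = ⋃ { int_{βX} cl_{βX} C : C a cozero-set of X whose closure in X has P }`. -/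
def lambdaP (P : (Z : Type u) → [TopologicalSpace Z] → Prop) (X : Type u)
    [TopologicalSpace X] : Set (StoneCech X) :=
  ⋃ C ∈ {C : Set X | IsCozeroSet C ∧ P (closure C)},
    interior (closure (stoneCechUnit '' C))

/-- A pseudocompact space: every continuous real-valued function is bounded. -/
def Pseudocompact (Z : Type u) [TopologicalSpace Z] : Prop :=
  ∀ f : Z → ℝ, Continuous f → ∃ M, ∀ z, |f z| ≤ M

/-- `P` is a topological property: it is invariant under homeomorphisms. -/
def TopProperty (P : (Z : Type u) → [TopologicalSpace Z] → Prop) : Prop :=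
  ∀ (Z W : Type u) [TopologicalSpace Z] [TopologicalSpace W], Z ≃ₜ W → P Z → P W

/-- `P` is closed hereditary: closed subspaces of a space with `P` have `P`. -/
def ClosedHereditary (P : (Z : Type u) → [TopologicalSpace Z] → Prop) : Prop :=
  ∀ (Z : Type u) [TopologicalSpace Z], P Z → ∀ F : Set Z, IsClosed F → P F

/-- `P` is preserved under finite closed sums of subspaces. -/
def FiniteClosedSums (P : (Z : Type u) → [TopologicalSpace Z] → Prop) : Prop :=
  ∀ (Z : Type u) [TopologicalSpace Z] [T2Space Z] (n : ℕ) (F : Fin n → Set Z),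
    (∀ i, IsClosed (F i)) → (∀ i, P (F i)) → (⋃ i, F i) = univ → P Z

/-- `P` is preserved under locally finite closed sums of subspaces. -/
def LocallyFiniteClosedSums (P : (Z : Type u) → [TopologicalSpace Z] → Prop) : Prop :=
  ∀ (Z : Type u) [TopologicalSpace Z] [T2Space Z] (ι : Type u) (F : ι → Set Z),
    LocallyFinite F → (∀ i, IsClosed (F i)) → (∀ i, P (F i)) → (⋃ i, F i) = univ → P Z

/-- `P` is preserved under countable closed sums of subspaces. -/
def CountableClosedSums (P : (Z : Type u) → [TopologicalSpace Z] → Prop) : Prop :=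
  ∀ (Z : Type u) [TopologicalSpace Z] [T2Space Z] (F : ℕ → Set Z),
    (∀ i, IsClosed (F i)) → (∀ i, P (F i)) → (⋃ i, F i) = univ → P Z

/-- Mrówka's condition (W): if a Tychonoff space `T` has a point `p` with an open base `B` at
`p` such that `T \ b` has `P` for each `b ∈ B`, then `T` has `P`. -/
def MrowkaW (P : (Z : Type u) → [TopologicalSpace Z] → Prop) : Prop :=
  ∀ (T : Type u) [TopologicalSpace T] [T35Space T] (p : T) (B : Set (Set T)),
    (∀ b ∈ B, IsOpen b ∧ p ∈ b) →
    (∀ V : Set T, IsOpen V → p ∈ V → ∃ b ∈ B, b ⊆ V) →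
    (∀ b ∈ B, P (↥(bᶜ))) → P T

/-- `X` is locally-P: every point has an open neighborhood whose closure has `P`. -/
def LocallyP (P : (Z : Type u) → [TopologicalSpace Z] → Prop)
    (X : Type u) [TopologicalSpace X] : Prop :=
  ∀ x : X, ∃ U : Set X, IsOpen U ∧ x ∈ U ∧ P (closure U)

/-- `P` coincides with pseudocompactness. -/
def IsPseudocompactness (P : (Z : Type u) → [TopologicalSpace Z] → Prop) : Prop :=
  ∀ (Z : Type u) [TopologicalSpace Z], P Z ↔ Pseudocompact Z

/-- A `P`-far one-point extension: for every zero-set `Z` of `X` contained in a cozero-set `C`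
of `X` whose closure has `P`, the closure of `Z` in the extension misses the remainder. -/
def OnePointExt.PFar (P : (Z : Type u) → [TopologicalSpace Z] → Prop)
    (Y : OnePointExt X) : Prop :=
  ∀ Z C : Set X, IsZeroSet Z → IsCozeroSet C → P (closure C) → Z ⊆ C →
    Y.pt ∉ closure (Y.ι '' Z)

/-- Čech-complete: `Z` is a Gδ-set in `βZ`. -/
def CechComplete (Z : Type u) [TopologicalSpace Z] : Prop :=
  IsGδ (Set.range (stoneCechUnit : Z → StoneCech Z))

/-- The extension is first countable at the added point. -/
def OnePointExt.FirstCountableAtPt (Y : OnePointExt X) : Prop :=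
  (𝓝 Y.pt).IsCountablyGenerated

/-- Strong zero-dimensionality: `βX` has an open base of clopen sets. -/
def StronglyZeroDimensional (X : Type u) [TopologicalSpace X] : Prop :=
  ∀ U : Set (StoneCech X), IsOpen U → ∀ x ∈ U,
    ∃ V : Set (StoneCech X), IsClopen V ∧ x ∈ V ∧ V ⊆ U

/-- `Δ` is an order-isomorphism from the subset `A` of one-point extensions of `X` (with the
order `≤`) onto the subset `B` of one-point extensions of `Y`, where extensions are regarded
up to the equivalence `OnePointExt.equiv`: `Δ` maps `A` into `B`, reflects and preserves `≤`
on `A`, and every member of `B` is equivalent to the image of a member of `A`. -/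
def RestrictedOrderIso {X Y : Type u} [TopologicalSpace X] [TopologicalSpace Y]
    (A : Set (OnePointExt X)) (B : Set (OnePointExt Y))
    (Δ : OnePointExt X → OnePointExt Y) : Prop :=
  (∀ T ∈ A, Δ T ∈ B) ∧
  (∀ T1 ∈ A, ∀ T2 ∈ A, (T1.le T2 ↔ (Δ T1).le (Δ T2))) ∧
  (∀ S ∈ B, ∃ T ∈ A, (Δ T).equiv S)

/-!
If `Y` has `P` and `p ∉ Θ_X(Y)`, a function on `βY` separating `τ_Y p` from the remainder point
cuts out an open `W ∋ p` in `βX` whose trace `C` on `X` is a cozero-set; the closure of `C` in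
`Y` misses the remainder point, so `cl_X C` is a regular closed subset of `Y` and has `P`, whence
`p ∈ int cl C ⊆ λ_P X`. Conversely, if `βX \ λ_P X ⊆ Θ_X(Y)` and `V` is an open neighbourhood of
the remainder point, the compact set `cl_{βX}(X \ V)` misses `Θ_X(Y)` and is therefore covered by
finitely many `int cl C` with `cl_X C` having `P`. So `Y \ V` is a finite closed sum of `P`-spaces,
and `Y` has `P` by condition (W) — or, for pseudocompactness, a continuous function on `Y` is
bounded on `V` by continuity at the remainder point and on `Y \ V` piece by piece.

A compact `C ⊆ βX \ X` is `Θ_X(Y)` for `Y = X ∪ {∞}` inside the one-point compactification of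
`βX \ C` (that is, inside `βX / C`).
-/

section Pseudocompact

variable {α : Type u} [TopologicalSpace α]

theorem pseudocompact_iff_isBounded_range :
    Pseudocompact α ↔ ∀ f : α → ℝ, Continuous f → Bornology.IsBounded (range f) := by
  simp only [Pseudocompact, isBounded_iff_forall_norm_le, forall_mem_range, Real.norm_eq_abs]

theorem IsPseudocompactness.eq {P : (Z : Type u) → [TopologicalSpace Z] → Prop}
    (h : IsPseudocompactness P) : P = Pseudocompact :=
  funext fun Z => funext fun _ => propext (h Z)

theorem Pseudocompact.not_locallyFinite [CompletelyRegularSpace α] (h : Pseudocompact α)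
    {O : ℕ → Set α} (hO : ∀ n, IsOpen (O n)) (hne : ∀ n, (O n).Nonempty) : ¬LocallyFinite O := by
  intro hlf
  -- bumps of height `n` supported in `O n` add up to an unbounded continuous function
  choose u hu using hne
  have bump : ∀ n, ∃ φ : α → unitInterval, Continuous φ ∧ φ (u n) = 0 ∧ EqOn φ 1 (O n)ᶜ :=
    fun n => CompletelyRegularSpace.completely_regular (u n) (O n)ᶜ (hO n).isClosed_compl
      (not_not_intro (hu n))
  choose φ hφc hφ0 hφ1 using bump
  set g : ℕ → α → ℝ := fun n y => n * (1 - φ n y)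
  have hg_supp : ∀ n, Function.support (g n) ⊆ O n := fun n y hy => by
    by_contra hyO
    exact hy (by simp [g, hφ1 n hyO])
  have hg_nonneg : ∀ n y, 0 ≤ g n y := fun n y =>
    mul_nonneg n.cast_nonneg (sub_nonneg.2 (φ n y).2.2)
  have hlf_g : LocallyFinite fun n => Function.support (g n) := hlf.subset hg_supp
  obtain ⟨M, hM⟩ := h _ (continuous_finsum (fun n => by fun_prop) hlf_g)
  obtain ⟨n, hn⟩ := exists_nat_gt M
  have : (n : ℝ) ≤ ∑ᶠ k, g k (u n) :=
    calc (n : ℝ) = g n (u n) := by simp [g, hφ0 n]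
      _ ≤ ∑ᶠ k, g k (u n) :=
        single_le_finsum n (hlf_g.point_finite (u n)) fun k => hg_nonneg k (u n)
  linarith [le_abs_self (∑ᶠ k, g k (u n)), hM (u n)]

theorem locallyFinite_image_setOf_lt {F : Set α} (hF : IsClosed F) {g : F → ℝ}
    (hg : Continuous g) : LocallyFinite fun n : ℕ => ((↑) : F → α) '' {w | (n : ℝ) < g w} := by
  intro y
  by_cases hy : y ∈ F
  · obtain ⟨G, hG, hGsub⟩ := (mem_nhds_subtype F ⟨y, hy⟩ _).1
      ((isOpen_lt hg continuous_const).mem_nhds (lt_add_one (g ⟨y, hy⟩)))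
    refine ⟨G, hG, (finite_Iio ⌈g ⟨y, hy⟩ + 1⌉₊).subset ?_⟩
    rintro n ⟨_, ⟨w, hnw, rfl⟩, hwG⟩
    exact Nat.lt_ceil.2 (hnw.trans (hGsub hwG))
  · refine ⟨Fᶜ, hF.isOpen_compl.mem_nhds hy, finite_empty.subset ?_⟩
    rintro n ⟨_, ⟨w, -, rfl⟩, hw⟩
    exact hw w.2

theorem Pseudocompact.closure_of_isOpen [CompletelyRegularSpace α] (h : Pseudocompact α)
    {U : Set α} (hU : IsOpen U) : Pseudocompact (closure U) := by
  intro f hf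
  by_contra! hunb
  have hopen : ∀ n : ℕ, ∃ W : Set α, IsOpen W ∧
      ((↑) : closure U → α) ⁻¹' W = {w | (n : ℝ) < |f w|} :=
    fun n => isOpen_induced_iff.1 (isOpen_lt continuous_const hf.abs)
  choose W hWo hWeq using hopen
  refine h.not_locallyFinite (O := fun n => W n ∩ U) (fun n => (hWo n).inter hU) (fun n => ?_)
    ((locallyFinite_image_setOf_lt isClosed_closure hf.abs).subset
      fun n x hx => ⟨⟨x, subset_closure hx.2⟩, ?_, rfl⟩)
  · obtain ⟨z, hz⟩ := hunb n
    exact mem_closure_iff.1 z.2 (W n) (hWo n) (show z ∈ (↑) ⁻¹' W n by rw [hWeq]; exact hz)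
  · rw [← hWeq n]
    exact hx.1

end Pseudocompact

theorem isCozeroSet_setOf_lt {Z : Type u} [TopologicalSpace Z] {g : Z → ℝ} (hg : Continuous g)
    (a : ℝ) : IsCozeroSet {z | g z < a} := by
  refine ⟨fun z => projIcc 0 1 zero_le_one (a - g z),
    continuous_projIcc.comp (continuous_const.sub hg), ?_⟩
  ext z
  simp

namespace OnePointExt

variable (Y : OnePointExt X)

theorem tau_comp_stoneCechUnit : Y.tau ∘ stoneCechUnit = stoneCechUnit ∘ Y.ι :=
  stoneCechExtend_extends _

theorem tau_stoneCechUnit (x : X) : Y.tau (stoneCechUnit x) = stoneCechUnit (Y.ι x) :=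
  congrFun Y.tau_comp_stoneCechUnit x

theorem continuous_tau : Continuous Y.tau :=
  continuous_stoneCechExtend _

theorem isOpenEmbedding : IsOpenEmbedding Y.ι :=
  ⟨Y.emb, Y.range_eq ▸ isOpen_compl_singleton⟩

theorem mem_range_of_ne {y : Y.carrier} (h : y ≠ Y.pt) : y ∈ range Y.ι :=
  Y.range_eq ▸ h

theorem isCompact_theta : IsCompact Y.theta :=
  (isClosed_singleton.preimage Y.continuous_tau).isCompact

theorem theta_nonempty : Y.theta.Nonempty := by
  have hmaps : MapsTo stoneCechUnit (range Y.ι) (range Y.tau) := by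
    rintro _ ⟨x, rfl⟩
    exact ⟨_, Y.tau_stoneCechUnit x⟩
  exact (isCompact_range Y.continuous_tau).isClosed.closure_subset
    (map_mem_closure continuous_stoneCechUnit (Y.dense Y.pt) hmaps)

theorem theta_subset_compl_range : Y.theta ⊆ (range (stoneCechUnit : X → StoneCech X))ᶜ := by
  rintro _ hp ⟨x, rfl⟩
  have hx : Y.ι x = Y.pt :=
    injective_stoneCechUnit_of_t35Space ((Y.tau_stoneCechUnit x).symm.trans hp)
  exact (Y.range_eq ▸ mem_range_self x : Y.ι x ∈ ({Y.pt}ᶜ : Set Y.carrier)) hx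

theorem disjoint_theta_closure_image_preimage {F : Set Y.carrier} (hF : IsClosed F)
    (hpt : Y.pt ∉ F) : Disjoint Y.theta (closure (stoneCechUnit '' (Y.ι ⁻¹' F))) := by
  refine disjoint_left.2 fun p hp hcl => hpt ?_
  have hmaps : MapsTo Y.tau (stoneCechUnit '' (Y.ι ⁻¹' F)) (stoneCechUnit '' F) := by
    rintro _ ⟨x, hx, rfl⟩
    exact ⟨Y.ι x, hx, (Y.tau_stoneCechUnit x).symm⟩
  have := map_mem_closure Y.continuous_tau hcl hmaps
  rw [show Y.tau p = stoneCechUnit Y.pt from hp] at this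
  rw [← hF.closure_eq, isEmbedding_stoneCechUnit.closure_eq_preimage_closure_image]
  exact this

end OnePointExt

noncomputable def Topology.IsEmbedding.closureHomeomorph {α β : Type u} [TopologicalSpace α]
    [TopologicalSpace β] {f : α → β} (hf : IsEmbedding f) {S : Set α}
    (h : closure (f '' S) ⊆ range f) : closure S ≃ₜ closure (f '' S) :=
  (hf.homeomorphImage _).trans <| .setCongr <| by
    rw [hf.closure_eq_preimage_closure_image, image_preimage_eq_of_subset h]

noncomputable def subtypePreimageHomeomorph {α : Type u} [TopologicalSpace α] (s t : Set α) :
    ((↑) ⁻¹' t : Set s) ≃ₜ ((↑) ⁻¹' s : Set t) :=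
  (IsEmbedding.subtypeVal.homeomorphImage _).trans <|
    (Homeomorph.setCongr (by rw [Subtype.image_preimage_coe, Subtype.image_preimage_coe,
      inter_comm])).trans (IsEmbedding.subtypeVal.homeomorphImage _).symm

def RegularClosedHereditary (P : (Z : Type u) → [TopologicalSpace Z] → Prop) : Prop :=
  ∀ (Z : Type u) [TopologicalSpace Z] [T35Space Z], P Z → ∀ U : Set Z, IsOpen U → P (closure U)

section RegularClosedHereditary

variable {P : (Z : Type u) → [TopologicalSpace Z] → Prop}

theorem ClosedHereditary.regularClosedHereditary (h : ClosedHereditary P) :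
    RegularClosedHereditary P :=
  fun Z _ _ hZ _ _ => h Z hZ _ isClosed_closure

theorem IsPseudocompactness.regularClosedHereditary (h : IsPseudocompactness P) :
    RegularClosedHereditary P := by
  obtain rfl := h.eq
  exact fun _ _ _ hZ _ hU => hZ.closure_of_isOpen hU

variable {α β : Type u} [TopologicalSpace α] [TopologicalSpace β]

theorem RegularClosedHereditary.closure_of_isOpenEmbedding (hreg : RegularClosedHereditary P)
    (hProp : TopProperty P) [T35Space β] {e : α → β} (he : IsOpenEmbedding e) (hβ : P β)
    {S : Set α} (hS : IsOpen S) (h : closure (e '' S) ⊆ range e) : P (closure S) :=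
  hProp _ _ (he.isEmbedding.closureHomeomorph h).symm (hreg β hβ _ (he.isOpenMap S hS))

theorem RegularClosedHereditary.closure_of_subset (hreg : RegularClosedHereditary P)
    (hProp : TopProperty P) [T35Space α] {F U : Set α} (hF : IsClosed F) (hPF : P F)
    (hU : IsOpen U) (hUF : U ⊆ F) : P (closure U) := by
  have himage : ((↑) : F → α) '' ((↑) ⁻¹' U) = U := by
    rw [Subtype.image_preimage_coe, inter_eq_right.2 hUF]
  have h : closure (((↑) : F → α) '' ((↑) ⁻¹' U)) ⊆ range ((↑) : F → α) := by
    rw [himage, Subtype.range_coe]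
    exact hF.closure_subset_iff.2 hUF
  have := hProp _ _ (IsEmbedding.subtypeVal.closureHomeomorph h)
    (hreg F hPF _ (hU.preimage continuous_subtype_val))
  rwa [himage] at this

end RegularClosedHereditary

theorem subset_closure_image_preimage_stoneCechUnit {W : Set (StoneCech X)} (hW : IsOpen W) :
    W ⊆ closure (stoneCechUnit '' (stoneCechUnit ⁻¹' W)) := by
  rw [image_preimage_eq_inter_range]
  exact denseRange_stoneCechUnit.open_subset_closure_inter hW

section LambdaP

variable {P : (Z : Type u) → [TopologicalSpace Z] → Prop}

theorem mem_lambdaP_of_isOpen {W : Set (StoneCech X)} (hW : IsOpen W) {p : StoneCech X}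
    (hp : p ∈ W) (hcoz : IsCozeroSet (stoneCechUnit ⁻¹' W : Set X))
    (hPW : P (closure (stoneCechUnit ⁻¹' W : Set X))) : p ∈ lambdaP P X :=
  mem_biUnion (x := stoneCechUnit ⁻¹' W) ⟨hcoz, hPW⟩
    (interior_maximal (subset_closure_image_preimage_stoneCechUnit hW) hW hp)

variable [T35Space X]

theorem locallyP_of_range_subset_lambdaP (hreg : RegularClosedHereditary P)
    (hProp : TopProperty P) (h : range (stoneCechUnit : X → StoneCech X) ⊆ lambdaP P X) :
    LocallyP P X := by
  intro x
  obtain ⟨C, ⟨-, hPC⟩, hx⟩ := mem_iUnion₂.1 (h ⟨x, rfl⟩)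
  have hU : IsOpen (stoneCechUnit ⁻¹' interior (closure (stoneCechUnit '' C)) : Set X) :=
    isOpen_interior.preimage continuous_stoneCechUnit
  refine ⟨_, hU, hx, hreg.closure_of_subset hProp isClosed_closure hPC hU ?_⟩
  rw [isEmbedding_stoneCechUnit.closure_eq_preimage_closure_image C]
  exact preimage_mono interior_subset

theorem exists_fin_cover_of_subset_lambdaP {K : Set (StoneCech X)} (hK : IsCompact K)
    (hKl : K ⊆ lambdaP P X) : ∃ (n : ℕ) (C : Fin n → Set X),
      (∀ i, P (closure (C i))) ∧ stoneCechUnit ⁻¹' K ⊆ ⋃ i, closure (C i) := by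
  obtain ⟨S, hS, hSfin, hKS⟩ := hK.elim_finite_subcover_image (fun _ _ => isOpen_interior) hKl
  obtain ⟨n, C, hC⟩ := hSfin.fin_embedding
  refine ⟨n, C, fun i => (hS (hC ▸ mem_range_self i)).2, fun x hx => ?_⟩
  obtain ⟨c, hcS, hxc⟩ := mem_iUnion₂.1 (hKS hx)
  obtain ⟨i, rfl⟩ : c ∈ range C := hC.symm ▸ hcS
  refine mem_iUnion.2 ⟨i, ?_⟩
  rw [isEmbedding_stoneCechUnit.closure_eq_preimage_closure_image]
  exact mem_preimage.2 (interior_subset hxc)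

end LambdaP

theorem FiniteClosedSums.of_subset_iUnion {P : (Z : Type u) → [TopologicalSpace Z] → Prop}
    {α : Type u} [TopologicalSpace α] [T2Space α]
    (hsum : FiniteClosedSums P) (hch : ClosedHereditary P) (hProp : TopProperty P)
    {A : Set α} (hA : IsClosed A) {n : ℕ} {F : Fin n → Set α} (hF : ∀ i, IsClosed (F i))
    (hPF : ∀ i, P (F i)) (hAF : A ⊆ ⋃ i, F i) : P A := by
  refine hsum A n (fun i => (↑) ⁻¹' F i) (fun i => (hF i).preimage continuous_subtype_val)
    (fun i => ?_) (eq_univ_of_forall fun x => by simpa using hAF x.2)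
  exact hProp _ _ (subtypePreimageHomeomorph (F i) A)
    (hch _ (hPF i) _ (hA.preimage continuous_subtype_val))

namespace OnePointExt

variable {P : (Z : Type u) → [TopologicalSpace Z] → Prop} (Y : OnePointExt X)

theorem compl_lambdaP_subset_theta [T35Space X] (hreg : RegularClosedHereditary P)
    (hProp : TopProperty P) (hY : P Y.carrier) : (lambdaP P X)ᶜ ⊆ Y.theta := by
  intro p hp
  by_contra hpθ
  apply hp
  obtain ⟨f, hf, hfp, hfpt⟩ := CompletelyRegularSpace.completely_regular (Y.tau p)
    {stoneCechUnit Y.pt} isClosed_singleton hpθ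
  set W : Set (StoneCech X) := {q | (f (Y.tau q) : ℝ) < 1 / 2}
  have hfτ : Continuous fun q => (f (Y.tau q) : ℝ) :=
    continuous_subtype_val.comp (hf.comp Y.continuous_tau)
  have hW : IsOpen W := isOpen_lt hfτ continuous_const
  have hcl : closure (Y.ι '' (stoneCechUnit ⁻¹' W)) ⊆ {y | (f (stoneCechUnit y) : ℝ) ≤ 1 / 2} :=
    closure_minimal (fun _ ⟨x, hx, hy⟩ => by
        have : (f (Y.tau (stoneCechUnit x)) : ℝ) < 1 / 2 := hx
        rw [Y.tau_stoneCechUnit, hy] at this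
        exact this.le)
      (isClosed_le (continuous_subtype_val.comp (hf.comp continuous_stoneCechUnit))
        continuous_const)
  have hpt : Y.pt ∉ closure (Y.ι '' (stoneCechUnit ⁻¹' W)) := fun h => by
    have := hcl h
    norm_num [hfpt rfl] at this
  refine mem_lambdaP_of_isOpen hW (by norm_num [W, hfp])
    (isCozeroSet_setOf_lt (hfτ.comp continuous_stoneCechUnit) _)
    (hreg.closure_of_isOpenEmbedding hProp Y.isOpenEmbedding hY
      (hW.preimage continuous_stoneCechUnit) fun y hy => Y.mem_range_of_ne ?_)
  rintro rfl
  exact hpt hy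

def HasFinitePCovers (P : (Z : Type u) → [TopologicalSpace Z] → Prop) (Y : OnePointExt X) :
    Prop :=
  ∀ V : Set Y.carrier, IsOpen V → Y.pt ∈ V → ∃ (n : ℕ) (C : Fin n → Set X),
    (∀ i, P (closure (C i))) ∧ Y.ι ⁻¹' Vᶜ ⊆ ⋃ i, closure (C i)

theorem hasFinitePCovers_of_compl_lambdaP_subset_theta [T35Space X]
    (hY : (lambdaP P X)ᶜ ⊆ Y.theta) : Y.HasFinitePCovers P := by
  intro V hV hpt
  have hdisj := Y.disjoint_theta_closure_image_preimage hV.isClosed_compl (not_not_intro hpt)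
  have hK : closure (stoneCechUnit '' (Y.ι ⁻¹' Vᶜ)) ⊆ lambdaP P X := fun p hp => by
    by_contra hpl
    exact hdisj.notMem_of_mem_left (hY hpl) hp
  obtain ⟨n, C, hPC, hcov⟩ := exists_fin_cover_of_subset_lambdaP isClosed_closure.isCompact hK
  exact ⟨n, C, hPC, fun x hx => hcov (subset_closure (mem_image_of_mem _ hx))⟩

theorem pseudocompact_of_hasFinitePCovers (h : Y.HasFinitePCovers Pseudocompact) :
    Pseudocompact Y.carrier := by
  rw [pseudocompact_iff_isBounded_range]
  intro f hf
  set V := f ⁻¹' Ioo (f Y.pt - 1) (f Y.pt + 1)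
  obtain ⟨n, C, hC, hcov⟩ := h V (isOpen_Ioo.preimage hf) (by simp [V])
  have hsub : range f ⊆ Ioo (f Y.pt - 1) (f Y.pt + 1) ∪
      ⋃ i, range fun z : closure (C i) => f (Y.ι z) := by
    rintro _ ⟨y, rfl⟩
    by_cases hy : y ∈ V
    · exact Or.inl hy
    · obtain ⟨x, rfl⟩ := Y.mem_range_of_ne (y := y) (by rintro rfl; exact hy (by simp [V]))
      obtain ⟨i, hi⟩ := mem_iUnion.1 (hcov hy)
      exact Or.inr (mem_iUnion.2 ⟨i, ⟨x, hi⟩, rfl⟩)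
  refine ((Metric.isBounded_Ioo _ _).union (Bornology.isBounded_iUnion.2 fun i => ?_)).subset hsub
  exact pseudocompact_iff_isBounded_range.1 (hC i) _
    (hf.comp (Y.emb.continuous.comp continuous_subtype_val))

theorem prop_of_hasFinitePCovers [T35Space X] (hW : MrowkaW P) (hsum : FiniteClosedSums P)
    (hch : ClosedHereditary P) (hProp : TopProperty P) (h : Y.HasFinitePCovers P) :
    P Y.carrier := by
  refine hW Y.carrier Y.pt {V | IsOpen V ∧ Y.pt ∈ V} (fun _ hV => hV)
    (fun V hV hpt => ⟨V, ⟨hV, hpt⟩, subset_rfl⟩) ?_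
  rintro V ⟨hV, hpt⟩
  obtain ⟨n, C, hPC, hcov⟩ := h V hV hpt
  have hVc : Vᶜ ⊆ range Y.ι := fun y hy => Y.mem_range_of_ne (by rintro rfl; exact hy hpt)
  exact hProp _ _ (Y.emb.homeomorphOfSubsetRange hVc) (hsum.of_subset_iUnion hch hProp
    (hV.isClosed_compl.preimage Y.emb.continuous) (fun _ => isClosed_closure) hPC hcov)

theorem prop_of_compl_lambdaP_subset_theta [T35Space X] (hProp : TopProperty P)
    (hP : IsPseudocompactness P ∨ (ClosedHereditary P ∧ MrowkaW P ∧ FiniteClosedSums P))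
    (hY : (lambdaP P X)ᶜ ⊆ Y.theta) : P Y.carrier := by
  rcases hP with hps | ⟨hch, hW, hsum⟩
  · obtain rfl := hps.eq
    exact Y.pseudocompact_of_hasFinitePCovers (Y.hasFinitePCovers_of_compl_lambdaP_subset_theta hY)
  · exact Y.prop_of_hasFinitePCovers hW hsum hch hProp
      (Y.hasFinitePCovers_of_compl_lambdaP_subset_theta hY)

end OnePointExt

section Construction

open OnePoint

variable {K : Type u} [TopologicalSpace K]

def OnePointExt.ofEmbedding [T35Space K] {j : X → K} (hj : IsEmbedding j) {k : K}
    (hk : k ∉ range j) (hkd : k ∈ closure (range j)) : OnePointExt X where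
  carrier := ↥(insert k (range j))
  top := inferInstance
  t35 := inferInstance
  ι x := ⟨j x, mem_insert_of_mem _ (mem_range_self x)⟩
  emb := hj.codRestrict _ _
  pt := ⟨k, mem_insert _ _⟩
  range_eq := by
    ext ⟨z, hz⟩
    simp only [mem_range, mem_compl_iff, mem_singleton_iff, Subtype.mk.injEq]
    constructor
    · rintro ⟨x, rfl⟩ rfl
      exact hk ⟨x, rfl⟩
    · exact fun hzk => hz.resolve_left hzk
  dense := by
    refine IsInducing.subtypeVal.dense_iff.2 fun ⟨z, hz⟩ => ?_
    rw [← range_comp]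
    rcases hz with rfl | hz
    exacts [hkd, subset_closure hz]

theorem OnePointExt.theta_ofEmbedding [CompactSpace K] [T2Space K] {j : X → K}
    (hj : IsEmbedding j) {k : K} (hk : k ∉ range j) (hkd : k ∈ closure (range j))
    {q : StoneCech X → K} (hq : Continuous q) (hqj : q ∘ stoneCechUnit = j) :
    (OnePointExt.ofEmbedding hj hk hkd).theta = q ⁻¹' {k} := by
  set Y := OnePointExt.ofEmbedding hj hk hkd
  have hval : Continuous (Subtype.val : Y.carrier → K) := continuous_subtype_val
  ext p
  constructor
  · -- `q` factors through `τ_Y` via the extension of the inclusion `Y → K` to `βY`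
    have hE : stoneCechExtend hval ∘ Y.tau = q :=
      stoneCech_hom_ext ((continuous_stoneCechExtend hval).comp Y.continuous_tau) hq <|
        funext fun x => (congrArg (stoneCechExtend hval) (Y.tau_stoneCechUnit x)).trans
          ((stoneCechExtend_stoneCechUnit hval _).trans (congrFun hqj x).symm)
    intro hp
    exact (congrFun hE p).symm.trans ((congrArg (stoneCechExtend hval) hp).trans
      (stoneCechExtend_stoneCechUnit hval _))
  · intro hp
    have : (comap stoneCechUnit (𝓝 p)).NeBot := comap_neBot fun t ht =>
      let ⟨_, hxt, x, hx⟩ := mem_closure_iff_nhds.1 (denseRange_stoneCechUnit p) t ht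
      ⟨x, hx ▸ hxt⟩
    have hunit : Tendsto (stoneCechUnit : X → StoneCech X) (comap stoneCechUnit (𝓝 p)) (𝓝 p) :=
      tendsto_comap
    have hj : Tendsto j (comap stoneCechUnit (𝓝 p)) (𝓝 k) := by
      have := (hq.tendsto p).comp hunit
      rwa [hqj, show q p = k from hp] at this
    have hι : Tendsto Y.ι (comap stoneCechUnit (𝓝 p)) (𝓝 Y.pt) :=
      IsInducing.subtypeVal.tendsto_nhds_iff.2 hj
    refine tendsto_nhds_unique ((Y.continuous_tau.tendsto p).comp hunit) ?_
    rw [Y.tau_comp_stoneCechUnit]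
    exact (continuous_stoneCechUnit.tendsto _).comp hι

open Classical in
/-- The quotient map `Z → Z / C`, with `Z / C` realised as the one-point compactification of
`Z \ C`. -/
noncomputable def collapseToInfty {Z : Type u} (C : Set Z) (z : Z) : OnePoint (Cᶜ : Set Z) :=
  if h : z ∈ C then ∞ else ((⟨z, h⟩ : ↥Cᶜ) : OnePoint ↥Cᶜ)

theorem collapseToInfty_of_mem {Z : Type u} {C : Set Z} {z : Z} (h : z ∈ C) :
    collapseToInfty C z = ∞ :=
  dif_pos h

theorem collapseToInfty_of_notMem {Z : Type u} {C : Set Z} {z : Z} (h : z ∉ C) :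
    collapseToInfty C z = ((⟨z, h⟩ : ↥Cᶜ) : OnePoint ↥Cᶜ) :=
  dif_neg h

theorem preimage_collapseToInfty_infty {Z : Type u} (C : Set Z) :
    collapseToInfty C ⁻¹' {∞} = C := by
  ext z
  by_cases hz : z ∈ C <;> simp [collapseToInfty, hz]

theorem continuous_collapseToInfty {Z : Type u} [TopologicalSpace Z] [T2Space Z] {C : Set Z}
    (hC : IsClosed C) : Continuous (collapseToInfty C) := by
  refine continuous_iff_continuousAt.2 fun z => ?_
  by_cases hz : z ∈ C
  · -- the preimage of a basic neighbourhood of `∞` contains the complement of a compact set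
    rw [ContinuousAt, collapseToInfty_of_mem hz]
    refine hasBasis_nhds_infty.tendsto_right_iff.2 fun s ⟨_, hs⟩ => ?_
    have hzs : z ∉ ((↑) : ↥Cᶜ → Z) '' s := fun ⟨w, _, hw⟩ => w.2 (hw ▸ hz)
    filter_upwards [(hs.image continuous_subtype_val).isClosed.isOpen_compl.mem_nhds hzs]
      with w hw
    by_cases hwC : w ∈ C
    · exact Or.inr (collapseToInfty_of_mem hwC)
    · exact Or.inl ⟨_, fun hws => hw ⟨_, hws, rfl⟩, (collapseToInfty_of_notMem hwC).symm⟩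
  · have hcomp : collapseToInfty C ∘ ((↑) : ↥Cᶜ → Z) = (↑) :=
      funext fun w => collapseToInfty_of_notMem w.2
    exact (hC.isOpen_compl.isOpenEmbedding_subtypeVal.continuousAt_iff (x := ⟨z, hz⟩)).1
      (hcomp ▸ OnePoint.continuous_coe.continuousAt)

theorem exists_onePointExt_theta_eq [T35Space X] {C : Set (StoneCech X)} (hC : IsCompact C)
    (hne : C.Nonempty) (hCX : C ⊆ (range (stoneCechUnit : X → StoneCech X))ᶜ) :
    ∃ Y : OnePointExt X, Y.theta = C := by
  have : LocallyCompactSpace ↥Cᶜ := hC.isClosed.isOpen_compl.locallyCompactSpace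
  have hXC : ∀ x, stoneCechUnit x ∈ Cᶜ := fun x hx => hCX hx ⟨x, rfl⟩
  set j : X → OnePoint ↥Cᶜ := fun x => ↑(⟨stoneCechUnit x, hXC x⟩ : ↥Cᶜ)
  have hj : IsEmbedding j :=
    OnePoint.isOpenEmbedding_coe.isEmbedding.comp (isEmbedding_stoneCechUnit.codRestrict _ hXC)
  have hq : Continuous (collapseToInfty C) := continuous_collapseToInfty hC.isClosed
  have hqj : collapseToInfty C ∘ stoneCechUnit = j :=
    funext fun x => collapseToInfty_of_notMem (hXC x)
  have hk : ∞ ∉ range j := fun ⟨x, hx⟩ => OnePoint.coe_ne_infty _ hx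
  obtain ⟨c, hc⟩ := hne
  have hkd : (∞ : OnePoint ↥Cᶜ) ∈ closure (range j) := by
    have hmaps : MapsTo (collapseToInfty C) (range stoneCechUnit) (range j) := by
      rintro _ ⟨x, rfl⟩
      exact ⟨x, (congrFun hqj x).symm⟩
    have := map_mem_closure hq (denseRange_stoneCechUnit c) hmaps
    rwa [collapseToInfty_of_mem hc] at this
  exact ⟨_, (OnePointExt.theta_ofEmbedding hj hk hkd hq hqj).trans
    (preimage_collapseToInfty_infty C)⟩

end Construction

/-- Let `X` be a Tychonoff space and let `P` be either pseudocompactness, or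
a closed hereditary Mrówka topological property preserved under finite closed sums of
subspaces.  For a one-point Tychonoff extension `Y` of `X`: `Y` has `P` iff `X` is locally-P
and `βX \ λ_P X ⊆ Θ_X(Y)`.  Consequently `Θ_X` maps `{Y ∈ E(X) : Y has P}` onto the set of
nonempty compact subsets `C` of `βX \ X` with `βX \ λ_P X ⊆ C`. -/
theorem stmt9 {X : Type u} [TopologicalSpace X] [T35Space X]
    (P : (Z : Type u) → [TopologicalSpace Z] → Prop) (hProp : TopProperty P)
    (hP : IsPseudocompactness P ∨ (ClosedHereditary P ∧ MrowkaW P ∧ FiniteClosedSums P)) :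
    (∀ Y : OnePointExt X, P Y.carrier ↔ (LocallyP P X ∧ (lambdaP P X)ᶜ ⊆ Y.theta)) ∧
    {C : Set (StoneCech X) | ∃ Y : OnePointExt X, P Y.carrier ∧ Y.theta = C} =
      {C : Set (StoneCech X) | IsCompact C ∧ C.Nonempty ∧
        C ⊆ (Set.range (stoneCechUnit : X → StoneCech X))ᶜ ∧ (lambdaP P X)ᶜ ⊆ C} := by
  have hreg : RegularClosedHereditary P :=
    hP.elim IsPseudocompactness.regularClosedHereditary fun h => h.1.regularClosedHereditary
  have htheta (Y : OnePointExt X) (hY : P Y.carrier) : (lambdaP P X)ᶜ ⊆ Y.theta :=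
    Y.compl_lambdaP_subset_theta hreg hProp hY
  refine ⟨fun Y => ⟨fun hY => ⟨?_, htheta Y hY⟩,
    fun h => Y.prop_of_compl_lambdaP_subset_theta hProp hP h.2⟩, Set.ext fun C => ⟨?_, ?_⟩⟩
  · refine locallyP_of_range_subset_lambdaP hreg hProp ?_
    exact compl_subset_compl.1 ((htheta Y hY).trans Y.theta_subset_compl_range)
  · rintro ⟨Y, hY, rfl⟩
    exact ⟨Y.isCompact_theta, Y.theta_nonempty, Y.theta_subset_compl_range, htheta Y hY⟩
  · rintro ⟨hC, hne, hCX, hlam⟩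
    obtain ⟨Y, rfl⟩ := exists_onePointExt_theta_eq hC hne hCX
    exact ⟨Y, Y.prop_of_compl_lambdaP_subset_theta hProp hP hlam, rfl⟩
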